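/- If λ^{(1)},…,λ^{(m)} are pairwise distinct points of the open unit ball of ℂⁿ, then the vectors z_{λ^{(1)}},…,z_{λ^{(m)}} in ℓ²(F_n^+) are linearly independent. -/

import Mathlib

open scoped ComplexConjugate

/-!
As a function of the word `α`, `z_λ` is the character `α ↦ (conj λ)_α` of the free monoid, and
distinct points give distinct characters (they differ on some generator). Dedekind's lemma on
the linear independence of distinct characters then applies.
-/

theorem linearIndependent_freeMonoid_lift {ι α K : Type*} [CommRing K] [IsDomain K]
    {χ : ι → α → K} (hχ : Function.Injective χ) :
    LinearIndependent K fun j => ⇑(FreeMonoid.lift (χ j)) :=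
  (linearIndependent_monoidHom (FreeMonoid α) K).comp _ (FreeMonoid.lift.injective.comp hχ)

theorem lp.linearIndependent_of_apply_eq_prod {ι α 𝕜 : Type*} [NormedField 𝕜]
    {p : ENNReal} {χ : ι → α → 𝕜} (hχ : Function.Injective χ)
    (v : ι → lp (fun _ : List α => 𝕜) p) (hv : ∀ j w, v j w = (w.map (χ j)).prod) :
    LinearIndependent 𝕜 v := by
  let coords : lp (fun _ : List α => 𝕜) p →ₗ[𝕜] FreeMonoid α → 𝕜 :=
    { toFun x w := x w.toList
      map_add' _ _ := rfl
      map_smul' _ _ := rfl }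
  have coords_v : coords ∘ v = fun j => ⇑(FreeMonoid.lift (χ j)) := by
    funext j w
    exact (hv j w.toList).trans (FreeMonoid.lift_apply _ _).symm
  exact .of_comp coords (coords_v ▸ linearIndependent_freeMonoid_lift hχ)

theorem stmt1_general (n m : ℕ) (lam : Fin m → EuclideanSpace ℂ (Fin n))
    (hdist : Function.Injective lam)
    (z : Fin m → lp (fun _ : List (Fin n) => ℂ) 2)
    (hz : ∀ j (α : List (Fin n)), z j α = conj ((α.map fun i => lam j i).prod)) :
    LinearIndependent ℂ z := by
  refine lp.linearIndependent_of_apply_eq_prod (χ := fun j i => conj (lam j i)) ?_ z ?_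
  · intro j k h
    exact hdist (PiLp.ext fun i => (starRingEnd ℂ).injective (congrFun h i))
  · intro j α
    rw [hz, map_list_prod, List.map_map]
    rfl

/-- If `λ⁽¹⁾,…,λ⁽ᵐ⁾` are pairwise distinct points of the open unit ball of `ℂⁿ`, then the
vectors `z_{λ⁽ʲ⁾} ∈ ℓ²(F_n^+)` with coordinates `conj (λ⁽ʲ⁾)_α` are linearly independent. -/
theorem stmt1 (n m : ℕ) (lam : Fin m → EuclideanSpace ℂ (Fin n))
    (hball : ∀ j, ‖lam j‖ < 1) (hdist : Function.Injective lam)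
    (z : Fin m → lp (fun _ : List (Fin n) => ℂ) 2)
    (hz : ∀ j (α : List (Fin n)), z j α = conj ((α.map fun i => lam j i).prod)) :
    LinearIndependent ℂ z :=
  stmt1_general n m lam hdist z hz
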